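/- Let π be a permutation of [n], let r ≥ 2, and let λ > 0 with 2nrλ < 1. Define the vector v indexed by permutations π′ of [n] whose entry at π′ is Σ_{j=0}^{r−1} (−1)^j · C(r−1, j) · ((j+1)λ)^{d_KT(π, π′)}, i.e., v = Σ_{j=0}^{r−1} (−1)^j C(r−1,j) Z_n((j+1)λ) v(M((j+1)λ, π)). Then ‖v‖₁ ≤ (2nrλ)^{r−1} / (1 − 2nrλ). -/

import Mathlib

open Finset

/-- Number of inversions of a permutation of `Fin n`. -/
def numInv {n : ℕ} (τ : Equiv.Perm (Fin n)) : ℕ :=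
  (Finset.univ.filter fun p : Fin n × Fin n => p.1 < p.2 ∧ τ p.2 < τ p.1).card

/-- Kendall-Tau distance between two permutations of `Fin n`. -/
def dKT {n : ℕ} (π π' : Equiv.Perm (Fin n)) : ℕ :=
  (Finset.univ.filter fun p : Fin n × Fin n =>
    p.1 < p.2 ∧ ¬((π p.1 < π p.2) ↔ (π' p.1 < π' p.2))).card

/-- The Mallows model probability of `σ`, with scaling parameter `φ` and center `c`. -/
noncomputable def mallows {n : ℕ} (φ : ℝ) (c : Equiv.Perm (Fin n)) (σ : Equiv.Perm (Fin n)) : ℝ :=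
  φ ^ dKT c σ / ∑ τ : Equiv.Perm (Fin n), φ ^ dKT c τ

/-- Total variation distance. -/
noncomputable def dTV {n : ℕ} (P Q : Equiv.Perm (Fin n) → ℝ) : ℝ :=
  (∑ σ : Equiv.Perm (Fin n), |P σ - Q σ|) / 2

/-!
The entry at `π'` depends only on `d = d_KT(π, π') = inv(π' π⁻¹)`. Up to sign it is the `k`-th
forward difference (`k = r - 1`) of the degree-`d` polynomial `t ↦ (tλ)^d` at `t = 1`, so it
vanishes for `d < k`, and it is at most `2^k (rλ)^d` in absolute value. Removing an adjacent
descent lowers the number of inversions by exactly one, so at most `n^d` permutations have `d`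
inversions. Hence the `ℓ₁` norm is at most `∑_{d ≥ k} (2nrλ)^d ≤ (2nrλ)^k / (1 - 2nrλ)`.
-/

theorem card_filter_ne_eq_two_mul {α : Type*} [LinearOrder α] [Fintype α]
    (P : α × α → Prop) [DecidablePred P] (hP : ∀ p : α × α, p.1 ≠ p.2 → (P p ↔ P p.swap)) :
    #{p : α × α | p.1 ≠ p.2 ∧ P p} = 2 * #{p : α × α | p.1 < p.2 ∧ P p} := by
  have hswap : #{p : α × α | p.2 < p.1 ∧ P p} = #{p : α × α | p.1 < p.2 ∧ P p} :=
    card_equiv (Equiv.prodComm α α) fun p => by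
      simpa [and_congr_right_iff] using fun h => hP p h.ne'
  rw [two_mul]
  nth_rw 2 [← hswap]
  rw [← card_union_of_disjoint (disjoint_filter.2 fun p _ h h' => lt_asymm h.1 h'.1),
    ← filter_or]
  congr 1
  ext p
  simp only [mem_filter, mem_univ, true_and, ne_iff_lt_or_gt, or_and_right]

section Permutations

variable {n : ℕ}

theorem dKT_mul_right (π π' ρ : Equiv.Perm (Fin n)) :
    dKT (π * ρ) (π' * ρ) = dKT π π' := by
  have hordered := fun σ σ' : Equiv.Perm (Fin n) =>
    card_filter_ne_eq_two_mul (fun p => ¬((σ p.1 < σ p.2) ↔ (σ' p.1 < σ' p.2))) fun p hp => by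
      simp only [Prod.fst_swap, Prod.snd_swap, ← not_le, (σ.injective.ne hp).le_iff_lt,
        (σ'.injective.ne hp).le_iff_lt]
      tauto
  -- Counted over ordered pairs, disagreements are visibly invariant under relabelling by `ρ`.
  have : 2 * dKT (π * ρ) (π' * ρ) = 2 * dKT π π' := by
    rw [dKT, dKT, ← hordered, ← hordered]
    exact card_equiv (ρ.prodCongr ρ) fun p => by
      rw [mem_filter, mem_filter]
      simp
  omega

theorem dKT_one_left (σ : Equiv.Perm (Fin n)) : dKT 1 σ = numInv σ := by
  refine congrArg card (filter_congr fun p _ => and_congr_right fun hp => ?_)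
  simp [hp, (σ.injective.ne hp.ne').le_iff_lt]

theorem dKT_eq_numInv (π π' : Equiv.Perm (Fin n)) :
    dKT π π' = numInv (π' * π⁻¹) := by
  rw [← dKT_one_left, ← dKT_mul_right π π' π⁻¹, mul_inv_cancel]

def inversions (σ : Equiv.Perm (Fin n)) : Finset (Fin n × Fin n) :=
  {p | p.1 < p.2 ∧ σ p.2 < σ p.1}

theorem numInv_eq_card_inversions (σ : Equiv.Perm (Fin n)) :
    numInv σ = #(inversions σ) := rfl

@[simp]
theorem mem_inversions {σ : Equiv.Perm (Fin n)} {p : Fin n × Fin n} :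
    p ∈ inversions σ ↔ p.1 < p.2 ∧ σ p.2 < σ p.1 := by
  simp [inversions]

theorem numInv_eq_zero_iff_strictMono (σ : Equiv.Perm (Fin n)) :
    numInv σ = 0 ↔ StrictMono σ := by
  simp only [numInv_eq_card_inversions, card_eq_zero, eq_empty_iff_forall_notMem,
    mem_inversions, not_and, not_lt, Prod.forall]
  exact ⟨fun h x y hxy => (h x y hxy).lt_of_ne (σ.injective.ne hxy.ne),
    fun h x y hxy => (h hxy).le⟩

theorem numInv_eq_zero_iff (σ : Equiv.Perm (Fin n)) : numInv σ = 0 ↔ σ = 1 := by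
  rw [numInv_eq_zero_iff_strictMono]
  refine ⟨fun h => Equiv.ext (congrFun h.eq_id), ?_⟩
  rintro rfl
  exact strictMono_id

theorem exists_descent_of_numInv_ne_zero {m : ℕ} {σ : Equiv.Perm (Fin (m + 1))}
    (h : numInv σ ≠ 0) : ∃ i : Fin m, σ i.succ < σ i.castSucc := by
  contrapose! h
  exact (numInv_eq_zero_iff_strictMono σ).2 <| Fin.strictMono_iff_lt_succ.2 fun i =>
    (h i).lt_of_ne (σ.injective.ne (Fin.castSucc_lt_succ (i := i)).ne)

theorem swap_apply_lt_swap_apply {a b x y : Fin n} (hab : (b : ℕ) = a + 1) (hxy : x < y)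
    (hne : (x, y) ≠ (a, b)) : Equiv.swap a b x < Equiv.swap a b y := by
  rw [Ne, Prod.mk.injEq] at hne
  rw [Equiv.swap_apply_def, Equiv.swap_apply_def]
  split_ifs <;> omega

theorem numInv_mul_swap_add_one {σ : Equiv.Perm (Fin n)} {a b : Fin n}
    (hab : (b : ℕ) = a + 1) (hσ : σ b < σ a) :
    numInv (σ * Equiv.swap a b) + 1 = numInv σ := by
  set s := Equiv.swap a b
  -- Relabelling by `s` maps the inversions of `σ * s` onto those of `σ` other than `(a, b)`.
  have hmem : (a, b) ∈ inversions σ := mem_inversions.2 ⟨show a < b by rw [Fin.lt_def]; omega, hσ⟩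
  rw [numInv_eq_card_inversions, numInv_eq_card_inversions, ← card_erase_add_one hmem]
  congr 1
  refine card_equiv (s.prodCongr s) fun p => ?_
  simp only [mem_inversions, mem_erase, Equiv.prodCongr_apply, Prod.map, Equiv.Perm.mul_apply,
    Ne, Prod.mk.injEq]
  constructor
  · rintro ⟨hlt, hinv⟩
    have hne : (p.1, p.2) ≠ (a, b) := by
      rintro ⟨⟩
      simp only [s, Equiv.swap_apply_left, Equiv.swap_apply_right] at hinv
      exact lt_asymm hσ hinv
    refine ⟨fun ⟨h1, h2⟩ => ?_, swap_apply_lt_swap_apply hab hlt hne, hinv⟩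
    rw [Equiv.swap_apply_eq_iff, Equiv.swap_apply_left] at h1
    rw [Equiv.swap_apply_eq_iff, Equiv.swap_apply_right] at h2
    rw [h1, h2, Fin.lt_def] at hlt
    omega
  · rintro ⟨hne, hlt, hinv⟩
    have := swap_apply_lt_swap_apply hab hlt (by simpa using hne)
    simp only [s, Equiv.swap_apply_self] at this
    exact ⟨this, hinv⟩

end Permutations

theorem card_numInv_eq_le (n d : ℕ) : #{σ : Equiv.Perm (Fin n) | numInv σ = d} ≤ n ^ d := by
  induction d with
  | zero =>
    simpa using card_le_card (t := {1}) fun σ hσ =>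
      mem_singleton.2 ((numInv_eq_zero_iff σ).1 (mem_filter.1 hσ).2)
  | succ d ih =>
    rcases n with _ | m
    · simp [numInv_eq_card_inversions, inversions]
    · have hsub : ({σ | numInv σ = d + 1} : Finset (Equiv.Perm (Fin (m + 1)))) ⊆
          (univ ×ˢ ({σ | numInv σ = d} : Finset (Equiv.Perm (Fin (m + 1))))).image
            fun q : Fin m × _ => q.2 * Equiv.swap q.1.castSucc q.1.succ := by
        intro σ hσ
        rw [mem_filter] at hσ
        obtain ⟨i, hi⟩ := exists_descent_of_numInv_ne_zero (hσ.2.trans_ne d.succ_ne_zero)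
        have hτ : numInv (σ * Equiv.swap i.castSucc i.succ) = d := by
          have := numInv_mul_swap_add_one (by simp) hi
          omega
        exact mem_image.2 ⟨(i, σ * Equiv.swap i.castSucc i.succ),
          mem_product.2 ⟨mem_univ _, mem_filter.2 ⟨mem_univ _, hτ⟩⟩,
          by simp [mul_assoc]⟩
      calc _ ≤ m * #{σ : Equiv.Perm (Fin (m + 1)) | numInv σ = d} := by
            simpa using (card_le_card hsub).trans card_image_le
        _ ≤ (m + 1) * (m + 1) ^ d := Nat.mul_le_mul (by omega) ih
        _ = (m + 1) ^ (d + 1) := (pow_succ' _ _).symm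

theorem alternating_sum_choose_mul_pow_eq_zero {R : Type*} [CommRing R] {k d : ℕ} (h : d < k)
    (c : R) : ∑ j ∈ range (k + 1), (-1) ^ j * (k.choose j : R) * ((j + 1) * c) ^ d = 0 := by
  have hΔ := congrFun (fwdDiff_iter_pow_eq_zero_of_lt (R := R) h) 1
  rw [fwdDiff_iter_eq_sum_shift, Pi.zero_apply] at hΔ
  calc _ = (-1) ^ k * c ^ d * ∑ j ∈ range (k + 1),
        ((-1 : ℤ) ^ (k - j) * k.choose j) • (1 + j • (1 : R)) ^ d := by
        rw [mul_sum]
        refine sum_congr rfl fun j hj => ?_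
        have hsign : (-1 : R) ^ j = (-1) ^ k * (-1) ^ (k - j) := by
          rw [← pow_add, show k + (k - j) = j + 2 * (k - j) by grind, pow_add, pow_mul]
          simp
        simp only [zsmul_eq_mul, nsmul_eq_mul, mul_one, mul_pow, hsign]
        push_cast
        ring
    _ = 0 := by rw [hΔ, mul_zero]

def alternatingPowSum (k : ℕ) (lam : ℝ) (d : ℕ) : ℝ :=
  ∑ j ∈ range (k + 1), (-1) ^ j * (k.choose j : ℝ) * ((j + 1) * lam) ^ d

theorem abs_alternatingPowSum_le (k d : ℕ) {lam : ℝ} (hlam : 0 ≤ lam) :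
    |alternatingPowSum k lam d| ≤ 2 ^ k * ((k + 1) * lam) ^ d := by
  calc _ ≤ ∑ j ∈ range (k + 1), (k.choose j : ℝ) * ((k + 1) * lam) ^ d := by
        refine (abs_sum_le_sum_abs _ _).trans (sum_le_sum fun j hj => ?_)
        have hj : (j : ℝ) ≤ k := by exact_mod_cast Nat.lt_succ_iff.1 (mem_range.1 hj)
        rw [abs_mul, abs_mul, abs_pow, abs_neg, abs_one, one_pow, one_mul, Nat.abs_cast,
          abs_of_nonneg (by positivity)]
        gcongr
    _ = 2 ^ k * ((k + 1) * lam) ^ d := by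
        rw [← sum_mul, ← Nat.cast_sum, Nat.sum_range_choose, Nat.cast_pow, Nat.cast_ofNat]

theorem card_numInv_eq_nsmul_abs_alternatingPowSum_le (n k d : ℕ) {lam : ℝ} (hlam : 0 ≤ lam) :
    #{σ : Equiv.Perm (Fin n) | numInv σ = d} • |alternatingPowSum k lam d|
      ≤ if k ≤ d then (2 * n * (k + 1) * lam) ^ d else 0 := by
  split_ifs with hkd
  · rw [nsmul_eq_mul]
    calc _ ≤ (n : ℝ) ^ d * (2 ^ d * ((k + 1) * lam) ^ d) := by
          gcongr
          · exact_mod_cast card_numInv_eq_le n d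
          · exact (abs_alternatingPowSum_le k d hlam).trans (by gcongr; norm_num)
      _ = (2 * n * (k + 1) * lam) ^ d := by
          rw [← mul_pow, ← mul_pow]
          ring_nf
  · rw [alternatingPowSum, alternating_sum_choose_mul_pow_eq_zero (by omega), abs_zero,
      smul_zero]

theorem sum_ite_pow_le {x : ℝ} (hx0 : 0 ≤ x) (hx1 : x < 1) (k : ℕ) (s : Finset ℕ) :
    ∑ d ∈ s, (if k ≤ d then x ^ d else 0) ≤ x ^ k / (1 - x) := by
  have hhead : ∑ d ∈ range k, (if k ≤ d then x ^ d else 0) = 0 :=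
    sum_eq_zero fun d hd => if_neg (not_le.2 (mem_range.1 hd))
  refine sum_le_hasSum s (fun d _ => by positivity) ((hasSum_nat_add_iff' k).1 ?_)
  rw [hhead, sub_zero]
  simpa [pow_add, mul_comm, div_eq_mul_inv] using
    (hasSum_geometric_of_lt_one hx0 hx1).mul_left (x ^ k)

theorem alternating_combination_l1_bound_general (n r : ℕ)
    (π : Equiv.Perm (Fin n)) (lam : ℝ) (hlam : 0 < lam)
    (hbound : 2 * (n : ℝ) * r * lam < 1) :
    ∑ π' : Equiv.Perm (Fin n),
        |∑ j ∈ Finset.range r,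
          (-1 : ℝ) ^ j * ((r - 1).choose j : ℝ) * (((j : ℝ) + 1) * lam) ^ dKT π π'|
      ≤ (2 * (n : ℝ) * r * lam) ^ (r - 1) / (1 - 2 * (n : ℝ) * r * lam) := by
  rcases r with _ | k
  · simp
  have hx0 : 0 ≤ 2 * (n : ℝ) * (k + 1) * lam := by positivity
  push_cast at hbound ⊢
  calc ∑ π', |alternatingPowSum k lam (dKT π π')|
      = ∑ σ, |alternatingPowSum k lam (numInv σ)| :=
        Fintype.sum_equiv (Equiv.mulRight π⁻¹) _ _ fun π' => by rw [dKT_eq_numInv]; rfl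
    _ = ∑ d ∈ univ.image numInv,
          #{σ : Equiv.Perm (Fin n) | numInv σ = d} • |alternatingPowSum k lam d| :=
        sum_comp (fun d => |alternatingPowSum k lam d|) numInv
    _ ≤ ∑ d ∈ univ.image numInv, if k ≤ d then (2 * n * (k + 1) * lam) ^ d else 0 :=
        sum_le_sum fun d _ => card_numInv_eq_nsmul_abs_alternatingPowSum_le n k d hlam.le
    _ ≤ _ := sum_ite_pow_le hx0 hbound k _

/-- **Claim inside Lemma 6.1 of Liu–Moitra.** Let `π` be a permutation of `[n]`, `r ≥ 2`
and `λ > 0` with `2nrλ < 1`. The vector `v` indexed by permutations `π'` of `[n]`, whose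
entry at `π'` is `Σ_{j=0}^{r-1} (-1)^j C(r-1, j) ((j+1)λ)^{d_KT(π, π')}` — that is,
`v = Σ_j (-1)^j C(r-1,j) Z_n((j+1)λ) v(M((j+1)λ, π))` — has
`‖v‖₁ ≤ (2nrλ)^{r-1}/(1 - 2nrλ)`. -/
theorem alternating_combination_l1_bound (n r : ℕ) (hr : 2 ≤ r)
    (π : Equiv.Perm (Fin n)) (lam : ℝ) (hlam : 0 < lam)
    (hbound : 2 * (n : ℝ) * r * lam < 1) :
    ∑ π' : Equiv.Perm (Fin n),
        |∑ j ∈ Finset.range r,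
          (-1 : ℝ) ^ j * ((r - 1).choose j : ℝ) * (((j : ℝ) + 1) * lam) ^ dKT π π'|
      ≤ (2 * (n : ℝ) * r * lam) ^ (r - 1) / (1 - 2 * (n : ℝ) * r * lam) :=
  alternating_combination_l1_bound_general n r π lam hlam hbound
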